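/- Let U be a neighborhood of 0 and let P : U → ℝ be a map such that for every x₀ ∈ U, P(x₀) = x(3τ), where x is a solution on [0,3τ] of the controlled system with x(0) = x₀. Then P(0) = 0 and P is differentiable at 0 with P'(0) = e^{3λτ}·(1 + ετ·(1 − e^{λτ})·e^{−2λτ}). -/

import Mathlib

/-!
Write a solution as `x = x₀ y + e`, where `y` solves the system linearised at `0`. The error `e`
satisfies the linear delay equation forced by `f (x t) - λ x t`, which is `o(x₀)` as soon as
`x = O(x₀)` on `[0, 3τ]`. On `[2τ, 3τ]` the delayed arguments lie in `[0, 2τ]`, so Grönwall's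
inequality applied on `[0, 2τ]` and then on `[2τ, 3τ]` bounds such a delay equation; this gives
`e (3τ) = o(x₀)`, hence `P'(0) = y(3τ)`. The a priori bound `x = O(x₀)` comes from the same
estimate, since `f` is linearly bounded near `0`, together with a continuity argument keeping `x`
in that neighbourhood.
-/

/-- A solution on `[0,3τ]` of the ODFC system based on a delayed states difference
(with the control switched on, on `[2τ,3τ)`), with initial value `x₀`. -/
def IsSolDiffOn (f : ℝ → ℝ) (ε τ x₀ : ℝ) (x : ℝ → ℝ) : Prop :=
  ContinuousOn x (Set.Icc 0 (3 * τ)) ∧ x 0 = x₀ ∧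
  (∀ t ∈ Set.Ico (0 : ℝ) (2 * τ), HasDerivWithinAt x (f (x t)) (Set.Ici t) t) ∧
  (∀ t ∈ Set.Ico (2 * τ) (3 * τ),
      HasDerivWithinAt x (f (x t) + ε * (x (t - 2 * τ) - x (t - τ))) (Set.Ici t) t)


open Set Filter Topology Real

theorem gronwallBound_le_mul_exp {δ K ε x : ℝ} (hK : 0 ≤ K) (hε : 0 ≤ ε) :
    gronwallBound δ K ε x ≤ (δ + ε * x) * exp (K * x) := by
  rcases hK.eq_or_lt with rfl | hK
  · simp [gronwallBound_K0]
  rw [gronwallBound_of_K_ne_0 hK.ne']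
  -- `1 - K x ≤ exp (-(K x))`, multiplied by `exp (K x)`
  have hexp : exp (K * x) - 1 ≤ K * x * exp (K * x) := by
    have h := mul_le_mul_of_nonneg_right (add_one_le_exp (-(K * x))) (exp_pos (K * x)).le
    rw [← exp_add, neg_add_cancel, exp_zero] at h
    linarith
  have : ε / K * (exp (K * x) - 1) ≤ ε * x * exp (K * x) := by
    rw [div_mul_eq_mul_div, div_le_iff₀ hK]
    nlinarith
  linarith

section

variable {E : Type*} [NormedAddCommGroup E]

theorem norm_le_of_forall_norm_le_imp {x : ℝ → E} {a b δ β : ℝ} (hβ : β < δ)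
    (hx : ContinuousOn x (Icc a b))
    (h : ∀ T ∈ Icc a b, (∀ s ∈ Ico a T, ‖x s‖ ≤ δ) → ‖x T‖ ≤ β) :
    ∀ t ∈ Icc a b, ‖x t‖ ≤ β := by
  have hlt : ∀ t ∈ Icc a b, ‖x t‖ < δ := by
    by_contra! ⟨t, ht, hδt⟩
    -- `sInf S` is the first time at which `‖x‖` reaches `δ`.
    set S := Icc a b ∩ x ⁻¹' {y | δ ≤ ‖y‖}
    have hS : IsClosed S :=
      hx.preimage_isClosed_of_isClosed isClosed_Icc (isClosed_le continuous_const continuous_norm)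
    have hSbdd : BddBelow S := ⟨a, fun s hs => hs.1.1⟩
    have hT : sInf S ∈ S := hS.csInf_mem ⟨t, ht, hδt⟩ hSbdd
    have hbefore : ∀ s ∈ Ico a (sInf S), ‖x s‖ ≤ δ := fun s hs => by
      by_contra! hs'
      exact (csInf_le hSbdd ⟨⟨hs.1, hs.2.le.trans hT.1.2⟩, hs'.le⟩).not_gt hs.2
    exact ((h _ hT.1 hbefore).trans_lt hβ).not_ge hT.2
  exact fun t ht => h t ht fun s hs => (hlt s ⟨hs.1, hs.2.le.trans ht.2⟩).le

variable [NormedSpace ℝ E]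

theorem norm_le_mul_exp_of_norm_deriv_right_le {u u' : ℝ → E} {δ K ρ a b : ℝ}
    (hK : 0 ≤ K) (hρ : 0 ≤ ρ) (hu : ContinuousOn u (Icc a b))
    (hu' : ∀ t ∈ Ico a b, HasDerivWithinAt u (u' t) (Ici t) t) (ha : ‖u a‖ ≤ δ)
    (bound : ∀ t ∈ Ico a b, ‖u' t‖ ≤ K * ‖u t‖ + ρ) :
    ∀ t ∈ Icc a b, ‖u t‖ ≤ (δ + ρ * (b - a)) * exp (K * (b - a)) := by
  intro t ht
  have hδ : 0 ≤ δ := (norm_nonneg _).trans ha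
  calc ‖u t‖ ≤ gronwallBound δ K ρ (t - a) :=
        norm_le_gronwallBound_of_norm_deriv_right_le hu hu' ha bound t ht
    _ ≤ (δ + ρ * (t - a)) * exp (K * (t - a)) := gronwallBound_le_mul_exp hK hρ
    _ ≤ (δ + ρ * (b - a)) * exp (K * (b - a)) := by
        have hba : 0 ≤ b - a := by linarith [ht.1, ht.2]
        gcongr <;> exact ht.2

-- `(1 + 2τ) e^{2Kτ}` is the Grönwall factor of the first phase `[0, 2τ]`; in the second phase the
-- delayed terms add a forcing of at most `2 c` times the first-phase bound.
noncomputable def delayGronwallConst (K c τ : ℝ) : ℝ :=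
  (1 + 2 * τ) * exp (K * (2 * τ)) * ((1 + τ + 2 * c * τ) * exp (K * τ))

theorem delayGronwallConst_pos {K c τ : ℝ} (hc : 0 ≤ c) (hτ : 0 ≤ τ) :
    0 < delayGronwallConst K c τ := by
  unfold delayGronwallConst
  have : 0 ≤ c * τ := mul_nonneg hc hτ
  have : 0 < 1 + 2 * τ := by linarith
  have : 0 < 1 + τ + 2 * c * τ := by linarith
  positivity

theorem norm_le_delayGronwallConst_mul {u u₁' u₂' : ℝ → E} {K c τ ρ b : ℝ}
    (hK : 0 ≤ K) (hc : 0 ≤ c) (hτ : 0 ≤ τ) (hρ : 0 ≤ ρ) (hb : b ≤ 3 * τ)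
    (hu : ContinuousOn u (Icc 0 b))
    (hu₁' : ∀ t ∈ Ico 0 b, t < 2 * τ → HasDerivWithinAt u (u₁' t) (Ici t) t)
    (bound₁ : ∀ t ∈ Ico 0 b, t < 2 * τ → ‖u₁' t‖ ≤ K * ‖u t‖ + ρ)
    (hu₂' : ∀ t ∈ Ico 0 b, 2 * τ ≤ t → HasDerivWithinAt u (u₂' t) (Ici t) t)
    (bound₂ : ∀ t ∈ Ico 0 b, 2 * τ ≤ t →
      ‖u₂' t‖ ≤ K * ‖u t‖ + ρ + c * (‖u (t - 2 * τ)‖ + ‖u (t - τ)‖)) :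
    ∀ t ∈ Icc 0 b, ‖u t‖ ≤ delayGronwallConst K c τ * (‖u 0‖ + ρ) := by
  set M := ‖u 0‖ + ρ
  set A := (1 + 2 * τ) * exp (K * (2 * τ)) with hA_def
  set B := (1 + τ + 2 * c * τ) * exp (K * τ) with hB_def
  have hA : 1 ≤ A := one_le_mul_of_one_le_of_one_le (by linarith) (one_le_exp (by positivity))
  have hB : 1 ≤ B :=
    one_le_mul_of_one_le_of_one_le (by nlinarith [mul_nonneg hc hτ]) (one_le_exp (by positivity))
  have phase₁ : ∀ t ∈ Icc 0 b, t ≤ 2 * τ → ‖u t‖ ≤ A * M := by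
    intro t ht ht₂
    calc ‖u t‖ ≤ (‖u 0‖ + ρ * (t - 0)) * exp (K * (t - 0)) :=
          norm_le_mul_exp_of_norm_deriv_right_le hK hρ (hu.mono (Icc_subset_Icc_right ht.2))
            (fun s hs => hu₁' s ⟨hs.1, hs.2.trans_le ht.2⟩ (hs.2.trans_le ht₂)) le_rfl
            (fun s hs => bound₁ s ⟨hs.1, hs.2.trans_le ht.2⟩ (hs.2.trans_le ht₂)) t ⟨ht.1, le_rfl⟩
      _ ≤ (‖u 0‖ + ρ * (2 * τ)) * exp (K * (2 * τ)) := by gcongr <;> linarith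
      _ ≤ (1 + 2 * τ) * M * exp (K * (2 * τ)) := by
          gcongr; nlinarith [norm_nonneg (u 0)]
      _ = A * M := by rw [hA_def]; ring
  intro t ht
  rcases le_or_gt t (2 * τ) with ht₂ | ht₂
  · calc ‖u t‖ ≤ A * M := phase₁ t ht ht₂
      _ ≤ A * B * M := by gcongr; exact le_mul_of_one_le_right (by linarith) hB
  have h2τ : 2 * τ ∈ Icc 0 b := ⟨by linarith, by linarith [ht.2]⟩
  have bound₂' : ∀ s ∈ Ico (2 * τ) t, ‖u₂' s‖ ≤ K * ‖u s‖ + (ρ + c * (2 * (A * M))) := by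
    intro s hs
    have hs' : s ∈ Ico 0 b := ⟨by linarith [hs.1], hs.2.trans_le ht.2⟩
    have h₁ := phase₁ (s - 2 * τ) ⟨by linarith [hs.1], by linarith [hs'.2]⟩ (by linarith [hs'.2])
    have h₂ := phase₁ (s - τ) ⟨by linarith [hs.1], by linarith [hs'.2]⟩ (by linarith [hs'.2])
    calc ‖u₂' s‖ ≤ K * ‖u s‖ + ρ + c * (‖u (s - 2 * τ)‖ + ‖u (s - τ)‖) := bound₂ s hs' hs.1
      _ ≤ K * ‖u s‖ + (ρ + c * (2 * (A * M))) := by nlinarith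
  calc ‖u t‖ ≤ (A * M + (ρ + c * (2 * (A * M))) * (t - 2 * τ)) * exp (K * (t - 2 * τ)) :=
        norm_le_mul_exp_of_norm_deriv_right_le hK (by positivity)
          (hu.mono (Icc_subset_Icc h2τ.1 ht.2))
          (fun s hs => hu₂' s ⟨by linarith [hs.1], hs.2.trans_le ht.2⟩ hs.1)
          (phase₁ _ h2τ le_rfl) bound₂' t ⟨ht₂.le, le_rfl⟩
    _ ≤ (A * M + (ρ + c * (2 * (A * M))) * τ) * exp (K * τ) := by
        gcongr <;> linarith [ht.2]
    _ ≤ A * B * M := by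
        have hρ_le : ρ ≤ A * M := by nlinarith [norm_nonneg (u 0)]
        calc _ ≤ A * M * (1 + τ + 2 * c * τ) * exp (K * τ) := by
              gcongr; nlinarith [mul_le_mul_of_nonneg_right hρ_le hτ]
          _ = A * B * M := by rw [hB_def]; ring

end

noncomputable def odfcLinearSol (lam ε τ t : ℝ) : ℝ :=
  if t ≤ 2 * τ then exp (lam * t)
  else exp (lam * t) + ε * (t - 2 * τ) * (exp (lam * (t - 2 * τ)) - exp (lam * (t - τ)))

section

variable {lam ε τ : ℝ}

theorem odfcLinearSol_of_le {t : ℝ} (ht : t ≤ 2 * τ) :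
    odfcLinearSol lam ε τ t = exp (lam * t) :=
  if_pos ht

theorem odfcLinearSol_of_ge {t : ℝ} (ht : 2 * τ ≤ t) :
    odfcLinearSol lam ε τ t =
      exp (lam * t) + ε * (t - 2 * τ) * (exp (lam * (t - 2 * τ)) - exp (lam * (t - τ))) := by
  rcases ht.eq_or_lt with rfl | ht
  · simp [odfcLinearSol]
  · exact if_neg ht.not_ge

theorem continuous_odfcLinearSol : Continuous (odfcLinearSol lam ε τ) :=
  Continuous.if_le (by fun_prop) (by fun_prop) continuous_id continuous_const
    fun t ht => by simp [ht]

theorem isSolDiffOn_odfcLinearSol (hτ : 0 ≤ τ) :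
    IsSolDiffOn (lam * ·) ε τ 1 (odfcLinearSol lam ε τ) := by
  have hexp (c t : ℝ) :
      HasDerivAt (fun s => exp (lam * (s - c))) (lam * exp (lam * (t - c))) t := by
    simpa [mul_comm] using (((hasDerivAt_id t).sub_const c).const_mul lam).exp
  have hexp₀ (t : ℝ) : HasDerivAt (fun s => exp (lam * s)) (lam * exp (lam * t)) t := by
    simpa using hexp 0 t
  refine ⟨continuous_odfcLinearSol.continuousOn,
    by simp [odfcLinearSol_of_le (by linarith : (0 : ℝ) ≤ 2 * τ)], fun t ht => ?_, fun t ht => ?_⟩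
  · rw [odfcLinearSol_of_le ht.2.le]
    refine ((hexp₀ t).congr_of_eventuallyEq ?_).hasDerivWithinAt
    filter_upwards [eventually_lt_nhds ht.2] with s hs using odfcLinearSol_of_le hs.le
  · have hg := (hexp₀ t).add ((((hasDerivAt_id t).sub_const (2 * τ)).const_mul ε).mul
      ((hexp (2 * τ) t).sub (hexp τ t)))
    rw [odfcLinearSol_of_ge ht.1, odfcLinearSol_of_le (by linarith [ht.2] : t - 2 * τ ≤ 2 * τ),
      odfcLinearSol_of_le (by linarith [ht.2] : t - τ ≤ 2 * τ)]
    refine (hg.hasDerivWithinAt.congr (fun s hs => odfcLinearSol_of_ge (ht.1.trans hs))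
      (odfcLinearSol_of_ge ht.1)).congr_deriv ?_
    simp only [id, Pi.sub_apply]
    ring

theorem odfcLinearSol_three_mul (hτ : 0 ≤ τ) :
    odfcLinearSol lam ε τ (3 * τ) =
      exp (3 * lam * τ) * (1 + ε * τ * (1 - exp (lam * τ)) * exp (-(2 * lam * τ))) := by
  rw [odfcLinearSol_of_ge (by linarith), show lam * (3 * τ) = lam * τ + lam * τ + lam * τ by ring,
    show 3 * lam * τ = lam * τ + lam * τ + lam * τ by ring,
    show lam * (3 * τ - 2 * τ) = lam * τ by ring,
    show lam * (3 * τ - τ) = lam * τ + lam * τ by ring,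
    show -(2 * lam * τ) = -(lam * τ + lam * τ) by ring]
  simp only [exp_add, exp_neg]
  field_simp
  ring

end

theorem norm_add_mul_sub_le (a ε p q : ℝ) : ‖a + ε * (p - q)‖ ≤ ‖a‖ + ‖ε‖ * (‖p‖ + ‖q‖) :=
  calc ‖a + ε * (p - q)‖ ≤ ‖a‖ + ‖ε‖ * ‖p - q‖ := by rw [← norm_mul]; exact norm_add_le _ _
    _ ≤ ‖a‖ + ‖ε‖ * (‖p‖ + ‖q‖) := by gcongr; exact norm_sub_le p q

namespace IsSolDiffOn

variable {f : ℝ → ℝ} {ε τ x₀ : ℝ} {x : ℝ → ℝ}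

theorem norm_le_mul_norm_initial (hx : IsSolDiffOn f ε τ x₀ x) {L δ : ℝ} (hL : 0 ≤ L) (hτ : 0 ≤ τ)
    (hf : ∀ z, ‖z‖ ≤ δ → ‖f z‖ ≤ L * ‖z‖) (hx₀ : delayGronwallConst L ‖ε‖ τ * ‖x₀‖ < δ) :
    ∀ t ∈ Icc 0 (3 * τ), ‖x t‖ ≤ delayGronwallConst L ‖ε‖ τ * ‖x₀‖ := by
  obtain ⟨hcont, hx0, hderiv₁, hderiv₂⟩ := hx
  refine norm_le_of_forall_norm_le_imp hx₀ hcont fun T hT hsmall => ?_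
  have hfx : ∀ t ∈ Ico 0 T, ‖f (x t)‖ ≤ L * ‖x t‖ := fun t ht => hf _ (hsmall t ht)
  simpa [hx0] using norm_le_delayGronwallConst_mul (u := x) (ρ := 0) hL (norm_nonneg ε) hτ le_rfl
    hT.2 (hcont.mono (Icc_subset_Icc_right hT.2))
    (fun t ht h => hderiv₁ t ⟨ht.1, h⟩) (fun t ht _ => by simpa using hfx t ht)
    (fun t ht h => hderiv₂ t ⟨h, ht.2.trans_le hT.2⟩)
    (fun t ht _ => (norm_add_mul_sub_le _ _ _ _).trans (by gcongr; simpa using hfx t ht))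
    T ⟨hT.1, le_rfl⟩

theorem norm_sub_mul_linear_le (hx : IsSolDiffOn f ε τ x₀ x) {lam ρ : ℝ} {y : ℝ → ℝ}
    (hy : IsSolDiffOn (lam * ·) ε τ 1 y) (hτ : 0 ≤ τ) (hρ : 0 ≤ ρ)
    (hf : ∀ t ∈ Icc 0 (3 * τ), ‖f (x t) - lam * x t‖ ≤ ρ) :
    ‖x (3 * τ) - x₀ * y (3 * τ)‖ ≤ delayGronwallConst ‖lam‖ ‖ε‖ τ * ρ := by
  obtain ⟨hxc, hx0, hx₁, hx₂⟩ := hx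
  obtain ⟨hyc, hy0, hy₁, hy₂⟩ := hy
  set e := fun t => x t - x₀ * y t
  have hlin (t : ℝ) :
      ‖lam * e t + (f (x t) - lam * x t)‖ ≤ ‖lam‖ * ‖e t‖ + ‖f (x t) - lam * x t‖ := by
    rw [← norm_mul]; exact norm_add_le _ _
  have h3τ : 3 * τ ∈ Icc 0 (3 * τ) := ⟨by linarith, le_rfl⟩
  simpa [e, hx0, hy0] using norm_le_delayGronwallConst_mul (u := e)
    (u₁' := fun t => lam * e t + (f (x t) - lam * x t))
    (u₂' := fun t => lam * e t + (f (x t) - lam * x t) + ε * (e (t - 2 * τ) - e (t - τ)))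
    (norm_nonneg lam) (norm_nonneg ε) hτ hρ le_rfl (hxc.sub (continuousOn_const.mul hyc))
    (fun t ht h => ((hx₁ t ⟨ht.1, h⟩).sub ((hy₁ t ⟨ht.1, h⟩).const_mul x₀)).congr_deriv
      (by simp only [e]; ring))
    (fun t ht _ => (hlin t).trans (by gcongr; exact hf t (Ico_subset_Icc_self ht)))
    (fun t ht h => ((hx₂ t ⟨h, ht.2⟩).sub ((hy₂ t ⟨h, ht.2⟩).const_mul x₀)).congr_deriv
      (by simp only [e]; ring))
    (fun t ht _ => (norm_add_mul_sub_le _ _ _ _).trans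
      (by gcongr; exact (hlin t).trans (by gcongr; exact hf t (Ico_subset_Icc_self ht))))
    (3 * τ) h3τ

end IsSolDiffOn

theorem eventually_forall_isSolDiffOn_norm_sub_le {f : ℝ → ℝ} {lam ε τ η : ℝ} (hf0 : f 0 = 0)
    (hfd : HasDerivAt f lam 0) (hτ : 0 ≤ τ) (hη : 0 < η) :
    ∀ᶠ x₀ in 𝓝 0, ∀ x, IsSolDiffOn f ε τ x₀ x →
      ‖x (3 * τ) - x₀ * odfcLinearSol lam ε τ (3 * τ)‖ ≤ η * ‖x₀‖ := by
  obtain ⟨L, hL, hf_bigO⟩ := hfd.isBigO_sub.exists_pos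
  obtain ⟨δ, hδ, hf_lin⟩ := Metric.nhds_basis_closedBall.eventually_iff.1 hf_bigO.bound
  set D := delayGronwallConst L ‖ε‖ τ
  set D' := delayGronwallConst ‖lam‖ ‖ε‖ τ
  have hD : 0 < D := delayGronwallConst_pos (norm_nonneg ε) hτ
  have hD' : 0 < D' := delayGronwallConst_pos (norm_nonneg ε) hτ
  obtain ⟨d, hd, hf_approx⟩ := Metric.nhds_basis_closedBall.eventually_iff.1
    ((hasDerivAt_iff_isLittleO.1 hfd).def (div_pos hη (mul_pos hD' hD)))
  have hsmall : ∀ᶠ x₀ in 𝓝 (0 : ℝ), D * ‖x₀‖ < min δ d := by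
    have hcont : Continuous fun x₀ : ℝ => D * ‖x₀‖ := by fun_prop
    have : Tendsto (fun x₀ : ℝ => D * ‖x₀‖) (𝓝 0) (𝓝 0) := by simpa using hcont.tendsto 0
    exact this.eventually (eventually_lt_nhds (lt_min hδ hd))
  filter_upwards [hsmall] with x₀ hx₀ x hx
  have hf_lin' (z : ℝ) (hz : ‖z‖ ≤ δ) : ‖f z‖ ≤ L * ‖z‖ := by
    simpa [hf0] using hf_lin (by simpa using hz : z ∈ Metric.closedBall 0 δ)
  have hbound := hx.norm_le_mul_norm_initial hL.le hτ hf_lin' (hx₀.trans_le (min_le_left _ _))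
  have hρ (t : ℝ) (ht : t ∈ Icc 0 (3 * τ)) :
      ‖f (x t) - lam * x t‖ ≤ η / (D' * D) * (D * ‖x₀‖) := by
    have hxt : x t ∈ Metric.closedBall 0 d := by
      simpa using (hbound t ht).trans (hx₀.le.trans (min_le_right _ _))
    calc ‖f (x t) - lam * x t‖ ≤ η / (D' * D) * ‖x t‖ := by
          simpa [hf0, mul_comm] using hf_approx hxt
      _ ≤ η / (D' * D) * (D * ‖x₀‖) := by gcongr; exact hbound t ht
  calc _ ≤ D' * (η / (D' * D) * (D * ‖x₀‖)) :=
        hx.norm_sub_mul_linear_le (isSolDiffOn_odfcLinearSol hτ) hτ (by positivity) hρ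
    _ = η * ‖x₀‖ := by field_simp

theorem odfc_states_difference_period_map_derivative_general
    (f : ℝ → ℝ) (lam ε τ : ℝ)
    (hf : ContDiff ℝ 1 f) (hfeq : f 0 = 0) (hfd : deriv f 0 = lam)
    (hτ : 0 < τ)
    (U : Set ℝ) (hU : U ∈ nhds (0 : ℝ)) (P : ℝ → ℝ)
    (hP : ∀ x₀ ∈ U, ∃ x : ℝ → ℝ, IsSolDiffOn f ε τ x₀ x ∧ P x₀ = x (3 * τ)) :
    P 0 = 0 ∧
    HasDerivAt P
      (Real.exp (3 * lam * τ) *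
        (1 + ε * τ * (1 - Real.exp (lam * τ)) * Real.exp (-(2 * lam * τ)))) 0 := by
  have hfd' : HasDerivAt f lam 0 := hfd ▸ (hf.differentiable one_ne_zero 0).hasDerivAt
  have hclose {η : ℝ} (hη : 0 < η) :=
    eventually_forall_isSolDiffOn_norm_sub_le (ε := ε) hfeq hfd' hτ.le hη
  have hP0 : P 0 = 0 := by
    obtain ⟨x, hx, hPx⟩ := hP 0 (mem_of_mem_nhds hU)
    simpa [hPx] using (hclose one_pos).self_of_nhds x hx
  refine ⟨hP0, ?_⟩
  rw [hasDerivAt_iff_isLittleO, ← odfcLinearSol_three_mul hτ.le]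
  refine Asymptotics.isLittleO_iff.2 fun c hc => ?_
  filter_upwards [hclose hc, hU] with x₀ hx₀ hx₀U
  obtain ⟨x, hx, hPx⟩ := hP x₀ hx₀U
  simpa [hP0, hPx, mul_comm] using hx₀ x hx

/-- The period map `P` of the ODFC method based on a delayed states difference fixes `0`
and has derivative `e^{3λτ}·(1 + ετ·(1 − e^{λτ})·e^{−2λτ})` at `0`. -/
theorem odfc_states_difference_period_map_derivative
    (f : ℝ → ℝ) (lam ε τ : ℝ)
    (hf : ContDiff ℝ 1 f) (hfeq : f 0 = 0) (hfd : deriv f 0 = lam)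
    (hlam : 0 < lam) (hτ : 0 < τ)
    (U : Set ℝ) (hU : U ∈ nhds (0 : ℝ)) (P : ℝ → ℝ)
    (hP : ∀ x₀ ∈ U, ∃ x : ℝ → ℝ, IsSolDiffOn f ε τ x₀ x ∧ P x₀ = x (3 * τ)) :
    P 0 = 0 ∧
    HasDerivAt P
      (Real.exp (3 * lam * τ) *
        (1 + ε * τ * (1 - Real.exp (lam * τ)) * Real.exp (-(2 * lam * τ)))) 0 :=
  odfc_states_difference_period_map_derivative_general f lam ε τ hf hfeq hfd hτ U hU P hP
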